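/- Let a, b ∈ ℤ² with det(a,b) = 1 (where det(x,y) = x₁y₂ − x₂y₁). If c ∈ ℤ² satisfies |det(a,c)| = 1 and |det(b,c)| = 1, then c ∈ {a+b, a−b, −a+b, −a−b}; conversely each of these four vectors satisfies both determinant conditions. -/

import Mathlib

/-- The determinant pairing on ℤ², i.e. the algebraic intersection number of
curves on the torus. -/
def detZ2 (x y : ℤ × ℤ) : ℤ := x.1 * y.2 - x.2 * y.1

/-! By Cramer's rule, `det(a, b) • c = det(c, b) • a + det(a, c) • b`. When `det(a, b) = 1` this
writes `c = -det(b, c) • a + det(a, c) • b`, so the two determinant conditions say exactly that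
both coefficients are `±1`. -/

section detZ2

variable (x y z : ℤ × ℤ)

@[simp]
lemma detZ2_self : detZ2 x x = 0 := by
  simp only [detZ2]; ring

lemma detZ2_swap : detZ2 y x = -detZ2 x y := by
  simp only [detZ2]; ring

@[simp]
lemma detZ2_add_right : detZ2 x (y + z) = detZ2 x y + detZ2 x z := by
  simp only [detZ2, Prod.fst_add, Prod.snd_add]; ring

@[simp]
lemma detZ2_neg_right : detZ2 x (-y) = -detZ2 x y := by
  simp only [detZ2, Prod.fst_neg, Prod.snd_neg]; ring

@[simp]
lemma detZ2_sub_right : detZ2 x (y - z) = detZ2 x y - detZ2 x z := by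
  simp only [detZ2, Prod.fst_sub, Prod.snd_sub]; ring

lemma detZ2_smul_eq_add_smul : detZ2 x y • z = detZ2 z y • x + detZ2 x z • y := by
  ext <;> simp only [detZ2, Prod.smul_fst, Prod.smul_snd, Prod.fst_add, Prod.snd_add,
    smul_eq_mul] <;> ring

end detZ2

lemma eq_neg_detZ2_smul_add_detZ2_smul {a b : ℤ × ℤ} (hab : detZ2 a b = 1) (c : ℤ × ℤ) :
    c = -detZ2 b c • a + detZ2 a c • b := by
  simpa [hab, detZ2_swap b c] using detZ2_smul_eq_add_smul a b c

/-- If det(a,b) = 1, then c satisfies |det(a,c)| = 1 and |det(b,c)| = 1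
if and only if c is one of a+b, a−b, −a+b, −a−b. -/
theorem third_curve_classification (a b : ℤ × ℤ) (hab : detZ2 a b = 1) (c : ℤ × ℤ) :
    (|detZ2 a c| = 1 ∧ |detZ2 b c| = 1) ↔
      (c = a + b ∨ c = a - b ∨ c = -a + b ∨ c = -a - b) := by
  have hba : detZ2 b a = -1 := by rw [detZ2_swap, hab]
  constructor
  · rintro ⟨hac, hbc⟩
    have hc := eq_neg_detZ2_smul_add_detZ2_smul hab c
    rcases (abs_eq zero_le_one).mp hac with hac | hac <;>
      rcases (abs_eq zero_le_one).mp hbc with hbc | hbc <;>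
      rw [hac, hbc] at hc <;> simp [hc, sub_eq_add_neg]
  · rintro (rfl | rfl | rfl | rfl) <;> simp [hab, hba]
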